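/- For every integer r ≥ 1, the sum over n from 1 to infinity of h_{n+1}^{(r)}/(n·C(n+r, r)) equals 1 + H_r. -/
import Mathlib

open Finset Real Filter Topology

noncomputable def H (n : ℕ) : ℝ := ∑ i ∈ Finset.range n, 1/((i:ℝ)+1)

noncomputable def H2 (n : ℕ) : ℝ := ∑ i ∈ Finset.range n, 1/((i:ℝ)+1)^2

noncomputable def H3 (n : ℕ) : ℝ := ∑ i ∈ Finset.range n, 1/((i:ℝ)+1)^3

noncomputable def hh (r n : ℕ) : ℝ := (Nat.choose (n+r-1) (r-1)) * (H (n+r-1) - H (r-1))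

noncomputable def zeta3 : ℝ := ∑' n : ℕ, 1/((n:ℝ)+1)^3

lemma H_succ (n : ℕ) : H (n+1) = H n + 1/((n:ℝ)+1) := by
  simp [H, Finset.sum_range_succ]

lemma H_nonneg (n : ℕ) : 0 ≤ H n := by
  apply Finset.sum_nonneg; intro i _; positivity

lemma H_diff_nonneg {a b : ℕ} (h : a ≤ b) : 0 ≤ H b - H a := by
  have : H a ≤ H b := by
    apply Finset.sum_le_sum_of_subset_of_nonneg (Finset.range_subset_range.2 h)
    intro i _ _; positivity
  linarith

lemma H_add (N m : ℕ) : H (N + m) = H N + ∑ i ∈ Finset.range m, 1/((N:ℝ)+i+1) := by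
  rw [H, H, Finset.sum_range_add]
  congr 1
  apply Finset.sum_congr rfl; intro i _; push_cast; ring

lemma H_diff_le (N r : ℕ) : H (N + r) - H N ≤ r * (1/((N:ℝ)+1)) := by
  rw [H_add]
  have : ∑ i ∈ Finset.range r, 1/((N:ℝ)+i+1) ≤ ∑ i ∈ Finset.range r, 1/((N:ℝ)+1) := by
    apply Finset.sum_le_sum
    intro i _
    apply one_div_le_one_div_of_le (by positivity)
    have : (0:ℝ) ≤ i := Nat.cast_nonneg i
    linarith
  simp only [Finset.sum_const, Finset.card_range, nsmul_eq_mul] at this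
  linarith

theorem stmt12 (r : ℕ) (hr : 1 ≤ r) :
    ∑' n : ℕ, hh r (n+2) / (((n:ℝ)+1) * (Nat.choose (n+1+r) r : ℝ)) = 1 + H r := by
  obtain ⟨m, rfl⟩ : ∃ m, r = m + 1 := ⟨r - 1, (Nat.succ_pred_eq_of_pos hr).symm⟩
  set f : ℕ → ℝ := fun n => ((m:ℝ)+1) * (H (n+m+2) - H m) / ((n:ℝ)+1) with hf
  set a : ℕ → ℝ := fun n =>
    hh (m+1) (n+2) / (((n:ℝ)+1) * (Nat.choose (n+1+(m+1)) (m+1) : ℝ)) with ha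
  -- term rewriting
  have key : ∀ n : ℕ, a n = (f n - f (n+1)) + (1/((n:ℝ)+2) - 1/((n:ℝ)+(m:ℝ)+3)) := by
    intro n
    have hidx : n + 2 + (m+1) - 1 = n + m + 2 := by omega
    have hidx2 : n + 1 + (m+1) = n + m + 2 := by omega
    have hidx3 : m + 1 - 1 = m := by omega
    have hch : ((Nat.choose (n+m+2) (m+1) : ℝ)) * ((m:ℝ)+1)
        = (Nat.choose (n+m+2) m : ℝ) * ((n:ℝ)+2) := by
      have h := Nat.choose_succ_right_eq (n+m+2) m
      have h2 : n + m + 2 - m = n + 2 := by omega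
      rw [h2] at h
      exact_mod_cast congrArg (Nat.cast : ℕ → ℝ) h
    have hpos : (0:ℝ) < (Nat.choose (n+m+2) (m+1) : ℝ) := by
      exact_mod_cast Nat.choose_pos (by omega)
    have step1 : a n = ((m:ℝ)+1) * (H (n+m+2) - H m) / (((n:ℝ)+1) * ((n:ℝ)+2)) := by
      rw [ha]
      simp only [hh, hidx, hidx2, hidx3]
      rw [div_eq_div_iff (by positivity) (by positivity)]
      linear_combination (-((n:ℝ)+1) * (H (n+m+2) - H m)) * hch
    rw [step1]; simp only [hf]
    have hHs : H (n+1+m+2) = H (n+m+2) + 1/((n:ℝ)+(m:ℝ)+3) := by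
      have e : n+1+m+2 = (n+m+2)+1 := by omega
      rw [e, H_succ]; push_cast; ring_nf
    rw [hHs]
    push_cast
    have p1 : ((n:ℝ)+1) ≠ 0 := by positivity
    have p2 : ((n:ℝ)+2) ≠ 0 := by positivity
    have p3 : ((n:ℝ)+(m:ℝ)+3) ≠ 0 := by positivity
    field_simp
    ring
  -- nonnegativity
  have hnn : ∀ n : ℕ, 0 ≤ a n := by
    intro n
    apply div_nonneg
    · exact mul_nonneg (Nat.cast_nonneg _) (H_diff_nonneg (by omega))
    · positivity
  -- partial sums of the two pieces
  have sum2 : ∀ N : ℕ, ∑ n ∈ Finset.range N, 1/((n:ℝ)+2) = H (N+1) - 1 := by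
    intro N
    induction N with
    | zero => simp [H]
    | succ k ih =>
      rw [Finset.sum_range_succ, ih]
      have h := H_succ (k+1)
      push_cast at h
      rw [show ((k:ℝ)+1)+1 = (k:ℝ)+2 by ring] at h
      linarith
  have sum3 : ∀ N : ℕ, ∑ n ∈ Finset.range N, 1/((n:ℝ)+(m:ℝ)+3) = H (N+m+2) - H (m+2) := by
    intro N
    induction N with
    | zero => simp
    | succ k ih =>
      rw [Finset.sum_range_succ, ih]
      have e : k+1+m+2 = (k+m+2)+1 := by omega
      rw [e]
      have h := H_succ (k+m+2)
      push_cast at h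
      rw [show ((k:ℝ)+(m:ℝ)+2)+1 = (k:ℝ)+(m:ℝ)+3 by ring] at h
      linarith
  -- limits
  have hHdiv : Tendsto (fun N : ℕ => H N / N) atTop (𝓝 0) := by
    have := tendsto_one_div_add_atTop_nhds_zero_nat.cesaro
    simpa [H, div_eq_inv_mul] using this
  have hHdiv1 : Tendsto (fun N : ℕ => H (N+1) / ((N:ℝ)+1)) atTop (𝓝 0) := by
    have h := hHdiv.comp (tendsto_add_atTop_nat 1)
    simp only [Function.comp_def] at h
    exact h.congr fun N => by push_cast; ring
  have hinv : Tendsto (fun N : ℕ => 1/((N:ℝ)+1)) atTop (𝓝 0) :=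
    tendsto_one_div_add_atTop_nhds_zero_nat
  have hdle : ∀ N : ℕ, H (N+m+2) - H (N+1) ≤ ((m:ℝ)+1) * (1/((N:ℝ)+2)) := by
    intro N
    have h := H_diff_le (N+1) (m+1)
    have e : N+1+(m+1) = N+m+2 := by omega
    rw [e] at h
    push_cast at h
    rw [show ((N:ℝ)+1)+1 = (N:ℝ)+2 by ring] at h
    linarith
  have limf : Tendsto f atTop (𝓝 0) := by
    have hub : ∀ N : ℕ, f N ≤
        ((m:ℝ)+1) * (H (N+1) / ((N:ℝ)+1)) + (((m:ℝ)+1)^2 + ((m:ℝ)+1)*H m) * (1/((N:ℝ)+1)) := by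
      intro N
      have hNpos : (0:ℝ) < (N:ℝ)+1 := by positivity
      have hfrac : (1:ℝ)/((N:ℝ)+2) ≤ 1 := by
        rw [div_le_one (by positivity)]; linarith
      have hm0 : (0:ℝ) ≤ (m:ℝ)+1 := by positivity
      have hnum : ((m:ℝ)+1) * (H (N+m+2) - H m)
          ≤ ((m:ℝ)+1) * H (N+1) + (((m:ℝ)+1)^2 + ((m:ℝ)+1)*H m) := by
        have hd := hdle N
        have hHm : 0 ≤ H m := H_nonneg m
        nlinarith [mul_le_mul_of_nonneg_left hfrac hm0]
      calc f N = ((m:ℝ)+1) * (H (N+m+2) - H m) / ((N:ℝ)+1) := rfl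
        _ ≤ (((m:ℝ)+1) * H (N+1) + (((m:ℝ)+1)^2 + ((m:ℝ)+1)*H m)) / ((N:ℝ)+1) := by
            gcongr
        _ = ((m:ℝ)+1) * (H (N+1) / ((N:ℝ)+1)) + (((m:ℝ)+1)^2 + ((m:ℝ)+1)*H m) * (1/((N:ℝ)+1)) := by
            ring
    have hlb : ∀ N : ℕ, 0 ≤ f N := by
      intro N
      apply div_nonneg _ (by positivity)
      exact mul_nonneg (by positivity) (H_diff_nonneg (by omega))
    have hlim : Tendsto (fun N : ℕ =>
        ((m:ℝ)+1) * (H (N+1) / ((N:ℝ)+1)) + (((m:ℝ)+1)^2 + ((m:ℝ)+1)*H m) * (1/((N:ℝ)+1)))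
        atTop (𝓝 0) := by
      have := (hHdiv1.const_mul ((m:ℝ)+1)).add (hinv.const_mul (((m:ℝ)+1)^2 + ((m:ℝ)+1)*H m))
      simpa using this
    exact squeeze_zero hlb hub hlim
  have limtail : Tendsto (fun N : ℕ => H (N+m+2) - H (N+1)) atTop (𝓝 0) := by
    have hub : ∀ N : ℕ, H (N+m+2) - H (N+1) ≤ ((m:ℝ)+1) * (1/((N:ℝ)+1)) := by
      intro N
      have hd := hdle N
      have hfrac : (1:ℝ)/((N:ℝ)+2) ≤ 1/((N:ℝ)+1) :=
        one_div_le_one_div_of_le (by positivity) (by linarith)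
      have hm0 : (0:ℝ) ≤ (m:ℝ)+1 := by positivity
      nlinarith [mul_le_mul_of_nonneg_left hfrac hm0]
    have hlb : ∀ N : ℕ, 0 ≤ H (N+m+2) - H (N+1) := fun N => H_diff_nonneg (by omega)
    have hlim : Tendsto (fun N : ℕ => ((m:ℝ)+1) * (1/((N:ℝ)+1))) atTop (𝓝 0) := by
      simpa using hinv.const_mul ((m:ℝ)+1)
    exact squeeze_zero hlb hub hlim
  -- the constant
  have hC : f 0 - 1 + H (m+2) = 1 + H (m+1) := by
    rw [hf]
    have h1 : H (m+2) = H m + 1/((m:ℝ)+1) + 1/((m:ℝ)+2) := by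
      rw [show m+2 = (m+1)+1 from rfl, H_succ, H_succ]; push_cast; ring
    have h2 : H (m+1) = H m + 1/((m:ℝ)+1) := H_succ m
    simp only [show (0:ℕ)+m+2 = m+2 from by omega]
    rw [h1, h2]
    push_cast
    field_simp
    ring
  -- assemble
  have hS : Tendsto (fun N : ℕ => ∑ n ∈ Finset.range N, a n) atTop (𝓝 (1 + H (m+1))) := by
    have hSeq : ∀ N : ℕ, ∑ n ∈ Finset.range N, a n
        = (f 0 - 1 + H (m+2)) - f N - (H (N+m+2) - H (N+1)) := by
      intro N
      calc ∑ n ∈ Finset.range N, a n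
          = ∑ n ∈ Finset.range N, ((f n - f (n+1)) + (1/((n:ℝ)+2) - 1/((n:ℝ)+(m:ℝ)+3))) := by
            exact Finset.sum_congr rfl fun n _ => key n
        _ = (f 0 - f N) + ((H (N+1) - 1) - (H (N+m+2) - H (m+2))) := by
            rw [Finset.sum_add_distrib, Finset.sum_range_sub' f, Finset.sum_sub_distrib,
              sum2, sum3]
        _ = (f 0 - 1 + H (m+2)) - f N - (H (N+m+2) - H (N+1)) := by ring
    rw [show (1 + H (m+1)) = (f 0 - 1 + H (m+2)) - 0 - 0 by rw [hC]; ring]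
    simp only [hSeq]
    exact (tendsto_const_nhds.sub limf).sub limtail
  exact ((hasSum_iff_tendsto_nat_of_nonneg hnn (1 + H (m+1))).2 hS).tsum_eq
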